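/- arXiv:1306.0018 — 2 statements merged into one kernel-verified Lean document; each statement's English description precedes it below -/
import Mathlib

section
/- Let L and L' be ijk-lists of quaternions over the integers. If L' is a permutation (rearrangement) of L, then the product of L' equals the product of L or equals the negative of the product of L. -/
open Quaternion

/-- The quaternion unit `i` over the integers. -/
def qi : ℍ[ℤ] := ⟨0, 1, 0, 0⟩

/-- The quaternion unit `j` over the integers. -/
def qj : ℍ[ℤ] := ⟨0, 0, 1, 0⟩

/-- The quaternion unit `k` over the integers. -/
def qk : ℍ[ℤ] := ⟨0, 0, 0, 1⟩

/-- A list of quaternions is an ijk-list if each element is `i`, `j` or `k`. -/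
def IsIJKList (L : List ℍ[ℤ]) : Prop := ∀ x ∈ L, x = qi ∨ x = qj ∨ x = qk

/-!
Any two of `i, j, k` commute or anticommute, so each adjacent transposition changes the product of
a list only by a sign; since adjacent transpositions generate all permutations, so does any
rearrangement.
-/

section UpToSign

variable {M : Type*} [Monoid M] [HasDistribNeg M]

def EqUpToSign (a b : M) : Prop := a = b ∨ a = -b

namespace EqUpToSign

theorem refl (a : M) : EqUpToSign a a := .inl rfl

theorem trans {a b c : M} (hab : EqUpToSign a b) (hbc : EqUpToSign b c) : EqUpToSign a c := by
  rcases hab with rfl | rfl <;> rcases hbc with rfl | rfl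
  exacts [.inl rfl, .inr rfl, .inr rfl, .inl (neg_neg _)]

theorem mul_left {a b : M} (h : EqUpToSign a b) (c : M) : EqUpToSign (c * a) (c * b) := by
  rcases h with rfl | rfl
  exacts [.inl rfl, .inr (mul_neg c _)]

theorem mul_right {a b : M} (h : EqUpToSign a b) (c : M) : EqUpToSign (a * c) (b * c) := by
  rcases h with rfl | rfl
  exacts [.inl rfl, .inr (neg_mul _ c)]

end EqUpToSign

def CommuteUpToSign (x y : M) : Prop := EqUpToSign (x * y) (y * x)

theorem List.Perm.prod_eqUpToSign {l l' : List M} (h : l'.Perm l)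
    (hcomm : ∀ x ∈ l, ∀ y ∈ l, CommuteUpToSign x y) : EqUpToSign l'.prod l.prod := by
  induction h with
  | nil => exact .refl _
  | cons x _ ih =>
    exact (ih fun a ha b hb => hcomm a (.tail _ ha) b (.tail _ hb)).mul_left x
  | swap x y l =>
    simpa only [List.prod_cons, ← mul_assoc] using
      (hcomm y (by simp) x (by simp)).mul_right l.prod
  | trans _ h₂₃ ih₁₂ ih₂₃ =>
    have hcomm₂ : ∀ x ∈ _, ∀ y ∈ _, CommuteUpToSign x y := fun a ha b hb =>
      hcomm a (h₂₃.subset ha) b (h₂₃.subset hb)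
    exact (ih₁₂ hcomm₂).trans (ih₂₃ hcomm)

end UpToSign

theorem commuteUpToSign_of_ijk {x y : ℍ[ℤ]} (hx : x = qi ∨ x = qj ∨ x = qk)
    (hy : y = qi ∨ y = qj ∨ y = qk) : CommuteUpToSign x y := by
  rcases hx with rfl | rfl | rfl <;> rcases hy with rfl | rfl | rfl <;>
    first
    | exact .refl _
    | exact .inr (by ext <;> rfl)

theorem perm_prod_eq_or_neg (L L' : List ℍ[ℤ]) (hL : IsIJKList L)
    (hperm : L'.Perm L) :
    L'.prod = L.prod ∨ L'.prod = -L.prod :=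
  hperm.prod_eqUpToSign fun x hx y hy => commuteUpToSign_of_ijk (hL x hx) (hL y hy)
end

section
/- Let L be an ijk-list of quaternions over the integers whose product equals i, and let L' be an ijk-list such that the number of occurrences of i in L and in L' have the same parity, and likewise for j and for k. Then the product of L' is not equal to j and not equal to k. (Combining Lemma 1 with the Remark: no parity-preserving replacement of elements can turn a type-A expression into one of type B or C in the ABC scheme.) -/
open Quaternion

instance : DecidableEq ℍ[ℤ] := fun _ _ => decidable_of_iff _ QuaternionAlgebra.ext_iff.symm

/-! Conjugation by `i` fixes `i` and negates `j` and `k`, so `i` commutes or anticommutes with the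
product of an ijk-list according to the parity of its number of `j`s and `k`s. Since `i` commutes
with itself, that number is even for `L`, hence for `L'`, so the product of `L'` commutes with `i`,
which neither `j` nor `k` does. -/

theorem SemiconjBy.neg_one_pow_mul_right {M : Type*} [Monoid M] [HasDistribNeg M] {a x y : M}
    {m n : ℕ} (hx : SemiconjBy a x ((-1) ^ m * x)) (hy : SemiconjBy a y ((-1) ^ n * y)) :
    SemiconjBy a (x * y) ((-1) ^ (m + n) * (x * y)) := by
  have h : (-1) ^ m * x * ((-1) ^ n * y) = (-1) ^ (m + n) * (x * y) := by
    rw [mul_assoc, ← mul_assoc x, ← ((Commute.neg_one_left x).pow_left n).eq, pow_add]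
    simp only [mul_assoc]
  exact h ▸ hx.mul_right hy

theorem IsIJKList.of_cons {x : ℍ[ℤ]} {L : List ℍ[ℤ]} (h : IsIJKList (x :: L)) : IsIJKList L :=
  fun y hy => h y (List.mem_cons_of_mem x hy)

theorem IsIJKList.semiconjBy_qi_prod {L : List ℍ[ℤ]} (hL : IsIJKList L) :
    SemiconjBy qi L.prod ((-1) ^ (L.count qj + L.count qk) * L.prod) := by
  induction L with
  | nil => simp
  | cons x L ih =>
    have hx : SemiconjBy qi x ((-1) ^ [qj, qk].count x * x) := by
      rcases hL x List.mem_cons_self with rfl | rfl | rfl <;> unfold SemiconjBy <;> decide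
    have hcount : (x :: L).count qj + (x :: L).count qk =
        [qj, qk].count x + (L.count qj + L.count qk) := by
      rcases hL x List.mem_cons_self with rfl | rfl | rfl <;> simp +decide <;> omega
    rw [List.prod_cons, hcount]
    exact hx.neg_one_pow_mul_right (ih hL.of_cons)

theorem IsIJKList.commute_qi_prod_of_even {L : List ℍ[ℤ]} (hL : IsIJKList L)
    (h : Even (L.count qj + L.count qk)) : Commute qi L.prod := by
  have hsemi := hL.semiconjBy_qi_prod
  rwa [h.neg_one_pow, one_mul] at hsemi

theorem IsIJKList.even_count_of_prod_eq_qi {L : List ℍ[ℤ]} (hL : IsIJKList L)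
    (h : L.prod = qi) : Even (L.count qj + L.count qk) := by
  by_contra hodd
  have hsemi := hL.semiconjBy_qi_prod
  rw [h, (Nat.not_even_iff_odd.mp hodd).neg_one_pow] at hsemi
  revert hsemi
  unfold SemiconjBy
  decide

theorem parity_of_prod_i_ne_j_ne_k_general (L L' : List ℍ[ℤ]) (hL : IsIJKList L) (hL' : IsIJKList L')
    (hprod : L.prod = qi)
    (hj : L.count qj % 2 = L'.count qj % 2)
    (hk : L.count qk % 2 = L'.count qk % 2) :
    L'.prod ≠ qj ∧ L'.prod ≠ qk := by
  have hE := hL.even_count_of_prod_eq_qi hprod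
  have hE' : Even (L'.count qj + L'.count qk) := by
    rw [Nat.even_iff] at hE ⊢
    omega
  have hcomm := hL'.commute_qi_prod_of_even hE'
  constructor <;> intro h <;> rw [h] at hcomm <;> revert hcomm <;> unfold Commute SemiconjBy <;> decide

theorem parity_of_prod_i_ne_j_ne_k (L L' : List ℍ[ℤ]) (hL : IsIJKList L) (hL' : IsIJKList L')
    (hprod : L.prod = qi)
    (hi : L.count qi % 2 = L'.count qi % 2)
    (hj : L.count qj % 2 = L'.count qj % 2)
    (hk : L.count qk % 2 = L'.count qk % 2) :
    L'.prod ≠ qj ∧ L'.prod ≠ qk :=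
  parity_of_prod_i_ne_j_ne_k_general L L' hL hL' hprod hj hk
end
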